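/- Let d0 > 0, β > 0, σ > 0, N ≥ 1, let x_1, …, x_N ∈ ℝ², let s ∈ ℝ², let A > 0, and let W_1, …, W_N ⊂ ℝ² be compact measurable sets with Lebesgue areas A_1, …, A_N. Define g_i(y) = ln( (d0 + ‖y − x_i‖^β) / (d0 + ‖s − x_i‖^β) ), and for each region index l define the random variable F_l(n) = (1/(A (2πσ²)^{N/2})) ∫_{W_l} exp( − Σ_{i=1}^{N} (g_i(y) + n_i)² / (2σ²) ) dy, where n = (n_1, …, n_N) are independent Gaussian random variables with mean 0 and variance σ². Fix an index i, and suppose that for every j ≠ i there are constants U_j ≥ 0 and L_j > 0 with |g_m(y)| ≤ U_j and Σ_{m=1}^{N} g_m(y)² ≥ L_j for all y ∈ W_j and all m; set η_j = √(U_j² + L_j/(2N)) − U_j and ε_j(σ) = A_j exp(−L_j/(4σ²)) / (A (2πσ²)^{N/2}). Then Prob[ F_i(n) ≥ Σ_{l=1}^{N} F_l(n) − Σ_{j ≠ i} ε_j(σ) ] ≥ Π_{j ≠ i} (1 − 2·Q(η_j/σ))^N. -/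

import Mathlib

open Real MeasureTheory ProbabilityTheory Set

/-!
If every noise component satisfies `|n_m| ≤ η_j`, then on `W_j` the cross terms cost at most
`2 U_j η_j ≤ L_j / (2N)` each, so `∑ (g_m + n_m)² ≥ L_j / 2` and `F_j(n) ≤ ε_j(σ)`. Hence the event
of the theorem contains the box `Tᴺ`, `T = ⋂_{j ≠ i} [-η_j, η_j]`, whose probability is `ν(T)ᴺ`.
The intervals are nested, so `ν(T)` is the smallest of the `ν[-η_j, η_j] = 1 - 2 Q(η_j / σ)`,
which dominates their product.
-/

lemma gaussianReal_zero_Iio_neg (v : NNReal) (t : ℝ) :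
    gaussianReal 0 v (Iio (-t)) = gaussianReal 0 v (Ioi t) := by
  have hsymm : (gaussianReal 0 v).map (fun x ↦ -x) = gaussianReal 0 v := by
    simpa using gaussianReal_map_neg (μ := 0) (v := v)
  conv_lhs => rw [← hsymm, Measure.map_apply measurable_neg measurableSet_Iio]
  congr 1
  ext x
  simp

lemma gaussianReal_zero_Icc_neg (v : NNReal) {t : ℝ} (ht : 0 ≤ t) :
    (gaussianReal 0 v).real (Icc (-t) t) = 1 - 2 * (gaussianReal 0 v).real (Ioi t) := by
  have hcompl : (Icc (-t) t)ᶜ = Iio (-t) ∪ Ioi t := by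
    ext x
    simp only [mem_compl_iff, mem_Icc, mem_union, mem_Iio, mem_Ioi, not_and_or, not_le]
  have hdisj : Disjoint (Iio (-t)) (Ioi t) :=
    (Iic_disjoint_Ioi (by linarith)).mono_left Iio_subset_Iic_self
  have h := probReal_compl_eq_one_sub (μ := gaussianReal 0 v) (measurableSet_Icc (a := -t) (b := t))
  rw [hcompl, measureReal_union hdisj measurableSet_Ioi, measureReal_def (s := Iio (-t)),
    gaussianReal_zero_Iio_neg, ← measureReal_def] at h
  linarith

lemma gaussianReal_sq_Ioi {σ : ℝ} (hσ : 0 < σ) (t : ℝ) :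
    gaussianReal 0 (σ ^ 2).toNNReal (Ioi t) = gaussianReal 0 1 (Ioi (t / σ)) := by
  have hscale := gaussianReal_map_const_mul (μ := 0) (v := 1) σ
  rw [mul_zero, mul_one, ← Real.toNNReal_of_nonneg] at hscale
  rw [← hscale, Measure.map_apply (measurable_const_mul σ) measurableSet_Ioi]
  congr 1
  ext y
  simp [div_lt_iff₀' hσ]

lemma gaussianReal_zero_one_Ioi (t : ℝ) :
    (gaussianReal 0 1).real (Ioi t) = 1 / √(2 * π) * ∫ y in Ioi t, exp (-y ^ 2 / 2) := by
  rw [measureReal_def, gaussianReal_apply_eq_integral 0 one_ne_zero, ENNReal.toReal_ofReal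
    (setIntegral_nonneg measurableSet_Ioi fun y _ ↦ gaussianPDFReal_nonneg _ _ y),
    ← integral_const_mul]
  congr with y
  simp [gaussianPDFReal]

lemma gaussianReal_sq_Icc_neg {σ t : ℝ} (hσ : 0 < σ) (ht : 0 ≤ t) :
    (gaussianReal 0 (σ ^ 2).toNNReal).real (Icc (-t) t)
      = 1 - 2 * (1 / √(2 * π) * ∫ y in Ioi (t / σ), exp (-y ^ 2 / 2)) := by
  rw [gaussianReal_zero_Icc_neg _ ht, measureReal_def, gaussianReal_sq_Ioi hσ, ← measureReal_def,
    gaussianReal_zero_one_Ioi]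

lemma measureReal_pi_univ_pi_const {ι α : Type*} [Fintype ι] [MeasurableSpace α]
    (ν : Measure α) [SigmaFinite ν] (T : Set α) :
    (Measure.pi fun _ : ι ↦ ν).real (univ.pi fun _ ↦ T) = ν.real T ^ Fintype.card ι := by
  simp only [measureReal_def, Measure.pi_pi, Finset.prod_const, Finset.card_univ,
    ENNReal.toReal_pow]

lemma prod_measureReal_Icc_le_biInter {ι : Type*} (ν : Measure ℝ) [IsProbabilityMeasure ν]
    (s : Finset ι) (a : ι → ℝ) :
    ∏ j ∈ s, ν.real (Icc (-a j) (a j)) ≤ ν.real (⋂ j ∈ s, Icc (-a j) (a j)) := by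
  rcases s.eq_empty_or_nonempty with rfl | hs
  · simp
  obtain ⟨j₀, hj₀, hmin⟩ := s.exists_min_image a hs
  have hsub : Icc (-a j₀) (a j₀) ⊆ ⋂ j ∈ s, Icc (-a j) (a j) :=
    subset_iInter₂ fun j hj ↦ Icc_subset_Icc (neg_le_neg (hmin j hj)) (hmin j hj)
  calc ∏ j ∈ s, ν.real (Icc (-a j) (a j))
      ≤ ∏ j ∈ {j₀}, ν.real (Icc (-a j) (a j)) :=
        Finset.prod_le_prod_of_subset_of_le_one (Finset.singleton_subset_iff.2 hj₀)
          (fun _ _ ↦ measureReal_nonneg) fun _ _ _ ↦ measureReal_le_one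
    _ ≤ ν.real (⋂ j ∈ s, Icc (-a j) (a j)) := by
        rw [Finset.prod_singleton]
        exact measureReal_mono hsub

lemma le_sqrt_sq_add (U : ℝ) {c : ℝ} (hc : 0 ≤ c) : U ≤ √(U ^ 2 + c) :=
  (le_abs_self U).trans (by rw [← sqrt_sq_eq_abs]; exact sqrt_le_sqrt (by linarith))

lemma two_mul_mul_sqrt_sq_add_sub_le (U : ℝ) {c : ℝ} (hc : 0 ≤ c) :
    2 * U * (√(U ^ 2 + c) - U) ≤ c := by
  nlinarith [sq_sqrt (by positivity : 0 ≤ U ^ 2 + c), sq_nonneg (√(U ^ 2 + c) - U)]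

lemma sq_sub_le_sq_add {g n U η : ℝ} (hg : |g| ≤ U) (hn : |n| ≤ η) :
    g ^ 2 - 2 * U * η ≤ (g + n) ^ 2 := by
  have hcross : |g * n| ≤ U * η := by
    rw [abs_mul]
    exact mul_le_mul hg hn (abs_nonneg _) ((abs_nonneg _).trans hg)
  nlinarith [neg_abs_le (g * n), sq_nonneg n]

lemma half_le_sum_sq_add {ι : Type*} [Fintype ι] [Nonempty ι] {g n : ι → ℝ} {U L : ℝ}
    (hL : 0 ≤ L) (hgU : ∀ m, |g m| ≤ U) (hgL : L ≤ ∑ m, g m ^ 2)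
    (hn : ∀ m, |n m| ≤ √(U ^ 2 + L / (2 * Fintype.card ι)) - U) :
    L / 2 ≤ ∑ m, (g m + n m) ^ 2 := by
  set N : ℝ := (Fintype.card ι : ℝ)
  have hN : 0 < N := Nat.cast_pos.2 Fintype.card_pos
  have hcross := two_mul_mul_sqrt_sq_add_sub_le U (c := L / (2 * N)) (by positivity)
  calc L / 2 = L - N * (L / (2 * N)) := by field_simp; ring
    _ ≤ ∑ m, g m ^ 2 - N * (2 * U * (√(U ^ 2 + L / (2 * N)) - U)) := by gcongr
    _ = ∑ m, (g m ^ 2 - 2 * U * (√(U ^ 2 + L / (2 * N)) - U)) := by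
        rw [Finset.sum_sub_distrib, Finset.sum_const, Finset.card_univ, nsmul_eq_mul]
    _ ≤ ∑ m, (g m + n m) ^ 2 := Finset.sum_le_sum fun m _ ↦ sq_sub_le_sq_add (hgU m) (hn m)

lemma setIntegral_exp_neg_div_le {E : Type*} [MeasurableSpace E] {μ : Measure E} {W : Set E}
    (hW : μ W < ⊤) {f : E → ℝ} {a c : ℝ} (hc : 0 ≤ c) (hf : ∀ y ∈ W, a ≤ f y) :
    ∫ y in W, exp (-f y / c) ∂μ ≤ μ.real W * exp (-a / c) := by
  have hnorm := norm_setIntegral_le_of_norm_le_const hW (f := fun y ↦ exp (-f y / c)) fun y hy ↦ by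
    rw [norm_of_nonneg (exp_pos _).le, exp_le_exp]
    exact div_le_div_of_nonneg_right (neg_le_neg (hf y hy)) hc
  rw [mul_comm]
  exact (le_abs_self _).trans hnorm

lemma setIntegral_exp_neg_sum_sq_add_le {E ι : Type*} [MeasurableSpace E] [Fintype ι]
    [Nonempty ι] {μ : Measure E} {W : Set E} (hW : μ W < ⊤) {g : E → ι → ℝ} {n : ι → ℝ}
    {U L : ℝ} (σ : ℝ) (hL : 0 ≤ L) (hgU : ∀ y ∈ W, ∀ m, |g y m| ≤ U)
    (hgL : ∀ y ∈ W, L ≤ ∑ m, g y m ^ 2)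
    (hn : ∀ m, |n m| ≤ √(U ^ 2 + L / (2 * Fintype.card ι)) - U) :
    ∫ y in W, exp (-(∑ m, (g y m + n m) ^ 2) / (2 * σ ^ 2)) ∂μ
      ≤ μ.real W * exp (-L / (4 * σ ^ 2)) := by
  have hexp : -(L / 2) / (2 * σ ^ 2) = -L / (4 * σ ^ 2) := by ring
  rw [← hexp]
  exact setIntegral_exp_neg_div_le hW (by positivity) fun y hy ↦
    half_le_sum_sq_add hL (hgU y hy) (hgL y hy) hn

lemma sum_sub_sum_erase_le {ι : Type*} [Fintype ι] [DecidableEq ι] {f g : ι → ℝ} {i : ι}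
    (h : ∀ j ∈ Finset.univ.erase i, f j ≤ g j) :
    ∑ l, f l - ∑ j ∈ Finset.univ.erase i, g j ≤ f i := by
  rw [← Finset.add_sum_erase _ _ (Finset.mem_univ i)]
  linarith [Finset.sum_le_sum h]
theorem strict_positivity_correct_hypothesis_general
    (d0 β σ A : ℝ) (hσ : 0 < σ) (hA : 0 < A)
    (N : ℕ)
    (x : Fin N → EuclideanSpace ℝ (Fin 2)) (s : EuclideanSpace ℝ (Fin 2))
    (W : Fin N → Set (EuclideanSpace ℝ (Fin 2)))
    (hWc : ∀ l, IsCompact (W l))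
    (F : (Fin N → ℝ) → Fin N → ℝ)
    (hF : ∀ n l, F n l = (1 / (A * (2 * Real.pi * σ ^ 2) ^ ((N : ℝ) / 2))) *
        ∫ y in W l, Real.exp (-(∑ m,
          (Real.log ((d0 + ‖y - x m‖ ^ β) / (d0 + ‖s - x m‖ ^ β)) + n m) ^ 2)
          / (2 * σ ^ 2)))
    (i : Fin N)
    (U L : Fin N → ℝ) (hL : ∀ j, j ≠ i → 0 < L j)
    (hgU : ∀ j, j ≠ i → ∀ y ∈ W j, ∀ m,
      |Real.log ((d0 + ‖y - x m‖ ^ β) / (d0 + ‖s - x m‖ ^ β))| ≤ U j)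
    (hgL : ∀ j, j ≠ i → ∀ y ∈ W j,
      L j ≤ ∑ m, (Real.log ((d0 + ‖y - x m‖ ^ β) / (d0 + ‖s - x m‖ ^ β))) ^ 2)
    (η : Fin N → ℝ) (hη : ∀ j, η j = Real.sqrt ((U j) ^ 2 + L j / (2 * N)) - U j)
    (ε : Fin N → ℝ)
    (hε : ∀ j, ε j = (volume (W j)).toReal * Real.exp (-(L j) / (4 * σ ^ 2))
        / (A * (2 * Real.pi * σ ^ 2) ^ ((N : ℝ) / 2)))
    (Q : ℝ → ℝ)
    (hQ : ∀ t : ℝ, Q t = (1 / Real.sqrt (2 * Real.pi))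
        * ∫ y in Set.Ioi t, Real.exp (-y ^ 2 / 2)) :
    ((Measure.pi fun _ : Fin N => gaussianReal 0 ⟨σ ^ 2, sq_nonneg σ⟩)
        {n : Fin N → ℝ |
          F n i ≥ (∑ l, F n l) - ∑ j ∈ Finset.univ.erase i, ε j}).toReal
      ≥ ∏ j ∈ Finset.univ.erase i, (1 - 2 * Q (η j / σ)) ^ N := by
  have : Nonempty (Fin N) := ⟨i⟩
  -- The anonymous constructor in the statement elaborates to a bare `Subtype.mk`, on which the
  -- `NNReal` instances needed below are not found.
  have hvar : gaussianReal 0 ⟨σ ^ 2, sq_nonneg σ⟩ = gaussianReal 0 (σ ^ 2).toNNReal :=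
    congrArg _ (Subtype.ext (Real.coe_toNNReal _ (sq_nonneg σ)).symm)
  rw [hvar, ge_iff_le, ← measureReal_def]
  set ν : Measure ℝ := gaussianReal 0 (σ ^ 2).toNNReal with hν
  set T : Set ℝ := ⋂ j ∈ Finset.univ.erase i, Icc (-η j) (η j)
  have hη_nonneg : ∀ j ∈ Finset.univ.erase i, 0 ≤ η j := fun j hj ↦ by
    rw [hη j, sub_nonneg]
    exact le_sqrt_sq_add _ (by have := hL j (Finset.ne_of_mem_erase hj); positivity)
  have hgood : univ.pi (fun _ ↦ T) ⊆
      {n | F n i ≥ (∑ l, F n l) - ∑ j ∈ Finset.univ.erase i, ε j} := fun n hn ↦ by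
    refine sum_sub_sum_erase_le fun j hj ↦ ?_
    have hji := Finset.ne_of_mem_erase hj
    have hnj : ∀ m, |n m| ≤ η j := fun m ↦ abs_le.2 (mem_iInter₂.1 (hn m (mem_univ m)) j hj)
    rw [hF, hε, one_div_mul_eq_div, ← measureReal_def]
    refine div_le_div_of_nonneg_right ?_ (by positivity)
    exact setIntegral_exp_neg_sum_sq_add_le (hWc j).measure_lt_top σ (hL j hji).le (hgU j hji)
      (hgL j hji) (by rwa [Fintype.card_fin, ← hη j])
  have hIcc : ∀ j ∈ Finset.univ.erase i, 1 - 2 * Q (η j / σ) = ν.real (Icc (-η j) (η j)) :=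
    fun j hj ↦ by rw [hν, gaussianReal_sq_Icc_neg hσ (hη_nonneg j hj), hQ]
  calc ∏ j ∈ Finset.univ.erase i, (1 - 2 * Q (η j / σ)) ^ N
      = (∏ j ∈ Finset.univ.erase i, ν.real (Icc (-η j) (η j))) ^ N := by
        rw [Finset.prod_pow, Finset.prod_congr rfl hIcc]
    _ ≤ ν.real T ^ N := pow_le_pow_left₀ (Finset.prod_nonneg fun _ _ ↦ measureReal_nonneg)
        (prod_measureReal_Icc_le_biInter ν _ η) N
    _ = (Measure.pi fun _ ↦ ν).real (univ.pi fun _ ↦ T) := by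
        rw [measureReal_pi_univ_pi_const, Fintype.card_fin]
    _ ≤ _ := measureReal_mono hgood

/-- Strict positivity for the correct hypothesis: with probability at least
Ω(σ) = ∏_{j ≠ i} (1 - 2Q(η_j/σ))^N, the MAP quantity for the correct region is
lower bounded by the total density minus ∑_{j ≠ i} ε_j(σ). -/
theorem strict_positivity_correct_hypothesis
    (d0 β σ A : ℝ) (hd0 : 0 < d0) (hβ : 0 < β) (hσ : 0 < σ) (hA : 0 < A)
    (N : ℕ) (hN : 1 ≤ N)
    (x : Fin N → EuclideanSpace ℝ (Fin 2)) (s : EuclideanSpace ℝ (Fin 2))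
    (W : Fin N → Set (EuclideanSpace ℝ (Fin 2)))
    (hWc : ∀ l, IsCompact (W l)) (hWm : ∀ l, MeasurableSet (W l))
    (F : (Fin N → ℝ) → Fin N → ℝ)
    (hF : ∀ n l, F n l = (1 / (A * (2 * Real.pi * σ ^ 2) ^ ((N : ℝ) / 2))) *
        ∫ y in W l, Real.exp (-(∑ m,
          (Real.log ((d0 + ‖y - x m‖ ^ β) / (d0 + ‖s - x m‖ ^ β)) + n m) ^ 2)
          / (2 * σ ^ 2)))
    (i : Fin N)
    (U L : Fin N → ℝ) (hU : ∀ j, j ≠ i → 0 ≤ U j) (hL : ∀ j, j ≠ i → 0 < L j)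
    (hgU : ∀ j, j ≠ i → ∀ y ∈ W j, ∀ m,
      |Real.log ((d0 + ‖y - x m‖ ^ β) / (d0 + ‖s - x m‖ ^ β))| ≤ U j)
    (hgL : ∀ j, j ≠ i → ∀ y ∈ W j,
      L j ≤ ∑ m, (Real.log ((d0 + ‖y - x m‖ ^ β) / (d0 + ‖s - x m‖ ^ β))) ^ 2)
    (η : Fin N → ℝ) (hη : ∀ j, η j = Real.sqrt ((U j) ^ 2 + L j / (2 * N)) - U j)
    (ε : Fin N → ℝ)
    (hε : ∀ j, ε j = (volume (W j)).toReal * Real.exp (-(L j) / (4 * σ ^ 2))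
        / (A * (2 * Real.pi * σ ^ 2) ^ ((N : ℝ) / 2)))
    (Q : ℝ → ℝ)
    (hQ : ∀ t : ℝ, Q t = (1 / Real.sqrt (2 * Real.pi))
        * ∫ y in Set.Ioi t, Real.exp (-y ^ 2 / 2)) :
    ((Measure.pi fun _ : Fin N => gaussianReal 0 ⟨σ ^ 2, sq_nonneg σ⟩)
        {n : Fin N → ℝ |
          F n i ≥ (∑ l, F n l) - ∑ j ∈ Finset.univ.erase i, ε j}).toReal
      ≥ ∏ j ∈ Finset.univ.erase i, (1 - 2 * Q (η j / σ)) ^ N :=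
  strict_positivity_correct_hypothesis_general d0 β σ A hσ hA N x s W hWc F hF i U L hL hgU hgL η hη
    ε hε Q hQ
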